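/- If C is a Boolean circuit over the standard basis {∨₂, ∧₂, ¬} containing k ¬-gates, in which every ¬-gate has a non-¬ incoming gate and no two ¬-gates share the same incoming gate, then EC(C) ≥ k. -/
import Mathlib


/-- A gate in a Boolean circuit over the standard basis `{∨₂, ∧₂, ¬}`:
input gates labelled by variables, and `∧`/`∨`/`¬` gates
whose arguments are (indices of) earlier gates. -/
inductive Gate (n : ℕ) : Type where
  | input : Fin n → Gate n
  | and : ℕ → ℕ → Gate n
  | or : ℕ → ℕ → Gate n
  | not : ℕ → Gate n
deriving DecidableEq

/-- The indices of the incoming gates of a gate. -/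
def Gate.deps {n : ℕ} : Gate n → List ℕ
  | .and a b => [a, b]
  | .or a b => [a, b]
  | .not a => [a]
  | _ => []

/-- Inner gates are the non-input gates, i.e. `∧`, `∨`, `¬` gates. -/
def Gate.isInner {n : ℕ} : Gate n → Bool
  | .and _ _ => true
  | .or _ _ => true
  | .not _ => true
  | _ => false

/-- A Boolean circuit over the standard basis on `n` input variables: a sequence of
gates (topologically sorted, so each gate only takes earlier gates as inputs,
which makes the underlying graph acyclic) together with a designated output gate. -/
structure Circuit (n : ℕ) : Type where
  size : ℕ
  gates : Fin size → Gate n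
  out : Fin size
  wf : ∀ i : Fin size, ∀ j ∈ (gates i).deps, j < (i : ℕ)

/-- The Boolean value of gate `i` of circuit `C` under input `x`. -/
def Circuit.evalGate {n : ℕ} (C : Circuit n) (x : Fin n → Bool) (i : ℕ) (h : i < C.size) :
    Bool :=
  match hg : C.gates ⟨i, h⟩ with
  | .input j => x j
  | .not a =>
      have ha : a < i := C.wf ⟨i, h⟩ a (by rw [hg]; simp [Gate.deps])
      ! C.evalGate x a (ha.trans h)
  | .and a b =>
      have ha : a < i := C.wf ⟨i, h⟩ a (by rw [hg]; simp [Gate.deps])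
      have hb : b < i := C.wf ⟨i, h⟩ b (by rw [hg]; simp [Gate.deps])
      C.evalGate x a (ha.trans h) && C.evalGate x b (hb.trans h)
  | .or a b =>
      have ha : a < i := C.wf ⟨i, h⟩ a (by rw [hg]; simp [Gate.deps])
      have hb : b < i := C.wf ⟨i, h⟩ b (by rw [hg]; simp [Gate.deps])
      C.evalGate x a (ha.trans h) || C.evalGate x b (hb.trans h)
termination_by i

/-- The output of circuit `C` on input `x`. -/
def Circuit.output {n : ℕ} (C : Circuit n) (x : Fin n → Bool) : Bool :=
  C.evalGate x C.out C.out.isLt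

/-- `C` computes the Boolean function `f`. -/
def Circuit.Computes {n : ℕ} (C : Circuit n) (f : (Fin n → Bool) → Bool) : Prop :=
  ∀ x, C.output x = f x

/-- The number of activated inner gates of `C` under input `x`. -/
def Circuit.energyAt {n : ℕ} (C : Circuit n) (x : Fin n → Bool) : ℕ :=
  (Finset.univ.filter fun i : Fin C.size =>
    (C.gates i).isInner = true ∧ C.evalGate x i i.isLt = true).card

/-- The energy complexity `EC(C)` of a circuit `C`: the maximum number of
activated inner gates over all inputs. -/
def Circuit.energy {n : ℕ} (C : Circuit n) : ℕ :=
  Finset.univ.sup fun x : Fin n → Bool => C.energyAt x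

/-- The energy complexity `EC(f)` of a Boolean function `f`: the minimum of `EC(C)`
over all circuits `C` computing `f`. -/
noncomputable def EC {n : ℕ} (f : (Fin n → Bool) → Bool) : ℕ :=
  sInf {k | ∃ C : Circuit n, C.Computes f ∧ C.energy = k}

/-- Whether a gate is a `¬`-gate. -/
def Gate.isNot {n : ℕ} : Gate n → Bool
  | .not _ => true
  | _ => false

lemma eval_input {n : ℕ} (C : Circuit n) (x : Fin n → Bool) (i : ℕ) (h : i < C.size)
    (j : Fin n) (hg : C.gates ⟨i, h⟩ = Gate.input j) :
    C.evalGate x i h = x j := by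
  rw [Circuit.evalGate]
  split <;> simp_all

lemma eval_not {n : ℕ} (C : Circuit n) (x : Fin n → Bool) (i : ℕ) (h : i < C.size)
    (a : ℕ) (ha : a < C.size) (hg : C.gates ⟨i, h⟩ = Gate.not a) :
    C.evalGate x i h = ! C.evalGate x a ha := by
  rw [Circuit.evalGate]
  split <;> simp_all

/-- If `C` is a circuit with `k` `¬`-gates such that every `¬`-gate has a
non-`¬` incoming gate and no two `¬`-gates share the same incoming gate, then `EC(C) ≥ k`. -/
theorem stmt6 (n : ℕ) (C : Circuit n) (k : ℕ)
    (hk : (Finset.univ.filter fun i : Fin C.size => (C.gates i).isNot = true).card = k)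
    (h1 : ∀ (i : Fin C.size) (a : ℕ) (ha : a < C.size),
      C.gates i = Gate.not a → (C.gates ⟨a, ha⟩).isNot = false)
    (h2 : ∀ (i j : Fin C.size) (a b : ℕ),
      C.gates i = Gate.not a → C.gates j = Gate.not b → i ≠ j → a ≠ b) :
    k ≤ C.energy := by
  classical
  set x0 : Fin n → Bool := fun _ => false with hx0
  -- argument of a not-gate
  set arg : Fin C.size → ℕ := fun i => match C.gates i with | Gate.not a => a | _ => 0 with harg
  have harg' : ∀ (i : Fin C.size) (a : ℕ), C.gates i = Gate.not a → arg i = a := by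
    intro i a hg; simp [harg, hg]
  set φ : Fin C.size → Fin C.size := fun i =>
    if h : arg i < C.size then
      (if C.evalGate x0 (arg i) h then ⟨arg i, h⟩ else i)
    else i with hφ
  set S : Finset (Fin C.size) :=
    Finset.univ.filter fun i : Fin C.size => (C.gates i).isNot = true with hS
  set T : Finset (Fin C.size) :=
    Finset.univ.filter fun i : Fin C.size =>
      (C.gates i).isInner = true ∧ C.evalGate x0 i i.isLt = true with hT
  -- every gate in S is a not-gate
  have hSnot : ∀ i ∈ S, ∃ a, C.gates i = Gate.not a := by
    intro i hi
    simp only [hS, Finset.mem_filter] at hi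
    rcases hg : C.gates i with j | ⟨a, b⟩ | ⟨a, b⟩ | a <;> simp [Gate.isNot, hg] at hi ⊢
  have key : ∀ (i : Fin C.size) (a : ℕ), C.gates i = Gate.not a →
      ∃ ha : a < C.size,
        (C.evalGate x0 a ha = true → (C.gates ⟨a, ha⟩).isInner = true) := by
    intro i a hg
    have ha : a < (i : ℕ) := C.wf i a (by rw [hg]; simp [Gate.deps])
    have haS : a < C.size := ha.trans i.isLt
    refine ⟨haS, ?_⟩
    intro hev
    rcases hg2 : C.gates ⟨a, haS⟩ with j | ⟨c, d⟩ | ⟨c, d⟩ | c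
    · rw [eval_input C x0 a haS j hg2] at hev; simp [hx0] at hev
    · simp [Gate.isInner]
    · simp [Gate.isInner]
    · have := h1 i a haS hg; simp [hg2, Gate.isNot] at this
  have hmaps : ∀ i ∈ S, φ i ∈ T := by
    intro i hi
    obtain ⟨a, hg⟩ := hSnot i hi
    obtain ⟨ha, hinner⟩ := key i a hg
    have hargi := harg' i a hg
    simp only [hφ, hargi, dif_pos ha]
    by_cases hev : C.evalGate x0 a ha = true
    · rw [if_pos hev]
      simp only [hT, Finset.mem_filter]
      exact ⟨Finset.mem_univ _, hinner hev, by convert hev⟩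
    · rw [if_neg hev]
      simp only [hT, Finset.mem_filter]
      have hcast : (⟨(i : ℕ), i.isLt⟩ : Fin C.size) = i := rfl
      have : C.evalGate x0 i i.isLt = ! C.evalGate x0 a ha := by
        refine eval_not C x0 i i.isLt a ha ?_
        rw [hcast]; exact hg
      refine ⟨Finset.mem_univ _, ?_, ?_⟩
      · simp [hg, Gate.isInner]
      · rw [this]; simp [Bool.not_eq_true] at hev ⊢; exact hev
  have hinj : Set.InjOn φ S := by
    intro i hi j hj hij
    obtain ⟨a, hga⟩ := hSnot i hi
    obtain ⟨b, hgb⟩ := hSnot j hj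
    obtain ⟨ha, _⟩ := key i a hga
    obtain ⟨hb, _⟩ := key j b hgb
    have hargi := harg' i a hga
    have hargj := harg' j b hgb
    by_contra hne
    simp only [hφ, hargi, hargj, dif_pos ha, dif_pos hb] at hij
    have haN : (C.gates ⟨a, ha⟩).isNot = false := h1 i a ha hga
    have hbN : (C.gates ⟨b, hb⟩).isNot = false := h1 j b hb hgb
    have hiN : (C.gates i).isNot = true := by simp [hga, Gate.isNot]
    have hjN : (C.gates j).isNot = true := by simp [hgb, Gate.isNot]
    by_cases he1 : C.evalGate x0 a ha = true <;>
      by_cases he2 : C.evalGate x0 b hb = true <;>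
        simp only [he1, he2, if_pos, if_neg, if_true, if_false, Bool.false_eq_true] at hij
    · have : a = b := by
        have := congrArg (Fin.val) hij; simpa using this
      exact h2 i j a b hga hgb hne this
    · rw [hij] at haN; rw [haN] at hjN; exact Bool.false_ne_true hjN
    · rw [← hij] at hbN; rw [hbN] at hiN; exact Bool.false_ne_true hiN
    · exact hne hij
  have hcard : S.card ≤ T.card := Finset.card_le_card_of_injOn φ hmaps hinj
  calc k = S.card := hk.symm
    _ ≤ T.card := hcard
    _ = C.energyAt x0 := rfl
    _ ≤ C.energy := Finset.le_sup (Finset.mem_univ x0)
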